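/- Let M > 0, Q ≠ 0, Λ > 0 and s ∈ (0,1] satisfy 8Q² < 9sM², Λ₋ < Λ < Λ₊ and 0 < Λ < Λ₊. Then the polynomial P(·,s) has exactly three positive roots R < r₀ < r∞; they satisfy P'(R,s) > 0, P'(r₀,s) < 0 and P'(r∞,s) > 0; moreover P(r,s) < 0 for all r ∈ [0,R) ∪ (r₀,r∞) and P(r,s) > 0 for all r ∈ (R,r₀) ∪ (r∞,∞). -/

import Mathlib

/-!
At a critical point `r` of `P` one has `2 P r = −(r − x₋)(r − x₊)`, where `x₋ < x₊` are the roots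
of `x² − 3sMx + 2sQ²`; and `P' x = (4sx³/3)(Λ − Λ(x))` with `Λ(x) = 3(x − sM)/(2sx³)`, the value
of `Λ` making `x` critical. The thresholds are exactly `Λ± = Λ(x±)`, so `Λ₋ < Λ < Λ₊` means
`P' x₋ > 0 > P' x₊`. Hence the depressed cubic `P'` has zeros `r₁ ∈ (x₋, x₊)` and `r₂ > x₊`,
with `P r₁ > 0 > P r₂`. Since `P 0 = −sQ² < 0` and `P → ∞`, `P` is negative, increasing to a
positive value, decreasing to a negative value and increasing to `+∞` on `[0, ∞)`, with exactly
one zero on each monotone piece.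
-/

noncomputable section

/-- The quartic polynomial `P(r,s) = sL/3*r^4 - r^2 + 2sM*r - sQ^2` (case `Q != 0`). -/
def P (M Q Λ s r : ℝ) : ℝ := s * Λ / 3 * r ^ 4 - r ^ 2 + 2 * s * M * r - s * Q ^ 2

/-- First derivative of `P` with respect to `r`. -/
def P' (M Q Λ s r : ℝ) : ℝ := 4 * s * Λ / 3 * r ^ 3 - 2 * r + 2 * s * M

/-- Second derivative of `P` with respect to `r`. -/
def P'' (M Q Λ s r : ℝ) : ℝ := 4 * s * Λ * r ^ 2 - 2

/-- `Λ₋`, defined for `β := 9sM² − 8Q² ≥ 0`. -/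
def Λminus (M Q s : ℝ) : ℝ :=
  1 / (32 * s ^ 2 * Q ^ 6) *
    (8 * Q ^ 4 - (9 * s * M ^ 2 - 8 * Q ^ 2) * (9 * s * M ^ 2 - 8 * Q ^ 2 + 4 * Q ^ 2)
      - 3 * Real.sqrt (s * M ^ 2 * (9 * s * M ^ 2 - 8 * Q ^ 2) ^ 3))

/-- `Λ₊`, defined for `β := 9sM² − 8Q² ≥ 0`. -/
def Λplus (M Q s : ℝ) : ℝ :=
  1 / (32 * s ^ 2 * Q ^ 6) *
    (8 * Q ^ 4 - (9 * s * M ^ 2 - 8 * Q ^ 2) * (9 * s * M ^ 2 - 8 * Q ^ 2 + 4 * Q ^ 2)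
      + 3 * Real.sqrt (s * M ^ 2 * (9 * s * M ^ 2 - 8 * Q ^ 2) ^ 3))

open Filter Set

section ThreeRoots

variable {f f' : ℝ → ℝ} {r₁ r₂ : ℝ}

theorem exists_three_roots_of_deriv_sign (hf : ∀ x, HasDerivAt f (f' x) x)
    (h₀₁ : 0 < r₁) (h₁₂ : r₁ < r₂)
    (hf'₀₁ : ∀ x, 0 < x → x < r₁ → 0 < f' x) (hf'₁₂ : ∀ x, r₁ < x → x < r₂ → f' x < 0)
    (hf'₂ : ∀ x, r₂ < x → 0 < f' x)
    (hf₀ : f 0 < 0) (hf₁ : 0 < f r₁) (hf₂ : f r₂ < 0) (hf_top : ∀ᶠ x in atTop, 0 < f x) :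
    ∃ R r₀ rinf : ℝ, 0 < R ∧ R < r₀ ∧ r₀ < rinf ∧
      f R = 0 ∧ f r₀ = 0 ∧ f rinf = 0 ∧
      (∀ r : ℝ, 0 < r → f r = 0 → r = R ∨ r = r₀ ∨ r = rinf) ∧
      0 < f' R ∧ f' r₀ < 0 ∧ 0 < f' rinf ∧
      (∀ r : ℝ, 0 ≤ r → r < R → f r < 0) ∧
      (∀ r : ℝ, r₀ < r → r < rinf → f r < 0) ∧
      (∀ r : ℝ, R < r → r < r₀ → 0 < f r) ∧
      (∀ r : ℝ, rinf < r → 0 < f r) := by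
  have hcont : Continuous f := continuous_iff_continuousAt.2 fun x => (hf x).continuousAt
  have hderiv : deriv f = f' := funext fun x => (hf x).deriv
  have mono₀₁ : StrictMonoOn f (Icc 0 r₁) :=
    strictMonoOn_of_deriv_pos (convex_Icc _ _) hcont.continuousOn fun x hx => by
      rw [interior_Icc] at hx
      exact hderiv ▸ hf'₀₁ x hx.1 hx.2
  have anti₁₂ : StrictAntiOn f (Icc r₁ r₂) :=
    strictAntiOn_of_deriv_neg (convex_Icc _ _) hcont.continuousOn fun x hx => by
      rw [interior_Icc] at hx
      exact hderiv ▸ hf'₁₂ x hx.1 hx.2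
  have mono₂ : StrictMonoOn f (Ici r₂) :=
    strictMonoOn_of_deriv_pos (convex_Ici _) hcont.continuousOn fun x hx => by
      rw [interior_Ici] at hx
      exact hderiv ▸ hf'₂ x hx
  obtain ⟨R, ⟨hR₀, hR₁⟩, hR⟩ :=
    intermediate_value_Ioo h₀₁.le hcont.continuousOn ⟨hf₀, hf₁⟩
  obtain ⟨r₀, ⟨h₁r₀, hr₀₂⟩, hr₀⟩ :=
    intermediate_value_Ioo' h₁₂.le hcont.continuousOn ⟨hf₂, hf₁⟩
  obtain ⟨T, hT, hr₂T⟩ := (hf_top.and (eventually_gt_atTop r₂)).exists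
  obtain ⟨rinf, ⟨h₂rinf, -⟩, hrinf⟩ :=
    intermediate_value_Ioo hr₂T.le hcont.continuousOn ⟨hf₂, hT⟩
  have hR_mem : R ∈ Icc 0 r₁ := ⟨hR₀.le, hR₁.le⟩
  have hr₀_mem : r₀ ∈ Icc r₁ r₂ := ⟨h₁r₀.le, hr₀₂.le⟩
  have hrinf_mem : rinf ∈ Ici r₂ := h₂rinf.le
  refine ⟨R, r₀, rinf, hR₀, hR₁.trans h₁r₀, hr₀₂.trans h₂rinf, hR, hr₀, hrinf, ?_,
    hf'₀₁ R hR₀ hR₁, hf'₁₂ r₀ h₁r₀ hr₀₂, hf'₂ rinf h₂rinf, ?_, ?_, ?_, ?_⟩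
  · intro r hr hfr
    rcases le_or_gt r r₁ with h₁ | h₁
    · exact .inl (mono₀₁.injOn ⟨hr.le, h₁⟩ hR_mem (hfr.trans hR.symm))
    rcases le_or_gt r r₂ with h₂ | h₂
    · exact .inr (.inl (anti₁₂.injOn ⟨h₁.le, h₂⟩ hr₀_mem (hfr.trans hr₀.symm)))
    · exact .inr (.inr (mono₂.injOn (mem_Ici.2 h₂.le) hrinf_mem (hfr.trans hrinf.symm)))
  · intro r hr hrR
    exact hR ▸ mono₀₁ ⟨hr, (hrR.trans hR₁).le⟩ hR_mem hrR
  · intro r hr₀r hrrinf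
    rcases le_or_gt r r₂ with h₂ | h₂
    · exact hr₀ ▸ anti₁₂ hr₀_mem ⟨(h₁r₀.trans hr₀r).le, h₂⟩ hr₀r
    · exact hrinf ▸ mono₂ (mem_Ici.2 h₂.le) hrinf_mem hrrinf
  · intro r hRr hrr₀
    rcases le_or_gt r r₁ with h₁ | h₁
    · exact hR ▸ mono₀₁ hR_mem ⟨(hR₀.trans hRr).le, h₁⟩ hRr
    · exact hr₀ ▸ anti₁₂ ⟨h₁.le, (hrr₀.trans hr₀₂).le⟩ hr₀_mem hrr₀
  · intro r hr
    exact hrinf ▸ mono₂ hrinf_mem (mem_Ici.2 (h₂rinf.trans hr).le) hr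

end ThreeRoots

theorem cubic_eq_mul_of_eq_zero {K : Type*} [Field K] {a b c r₁ r₂ : K} (h₁₂ : r₁ ≠ r₂)
    (h₁ : a * r₁ ^ 3 + b * r₁ + c = 0) (h₂ : a * r₂ ^ 3 + b * r₂ + c = 0) (x : K) :
    a * x ^ 3 + b * x + c = a * (x - r₁) * (x - r₂) * (x + r₁ + r₂) := by
  have hsym : a * (r₁ ^ 2 + r₁ * r₂ + r₂ ^ 2) + b = 0 :=
    (mul_eq_zero.1 (by linear_combination h₁ - h₂ : (r₁ - r₂) * _ = 0)).resolve_left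
      (sub_ne_zero.2 h₁₂)
  linear_combination (x - r₁) * hsym + h₁

section Quartic

variable {M Q Λ s : ℝ}

def xMinus (M Q s : ℝ) : ℝ := (3 * s * M - Real.sqrt (9 * s ^ 2 * M ^ 2 - 8 * s * Q ^ 2)) / 2

def xPlus (M Q s : ℝ) : ℝ := (3 * s * M + Real.sqrt (9 * s ^ 2 * M ^ 2 - 8 * s * Q ^ 2)) / 2

def criticalΛ (M s x : ℝ) : ℝ := 3 * (x - s * M) / (2 * s * x ^ 3)

theorem hasDerivAt_P (r : ℝ) : HasDerivAt (P M Q Λ s) (P' M Q Λ s r) r := by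
  have h := ((((hasDerivAt_pow 4 r).const_mul (s * Λ / 3)).sub (hasDerivAt_pow 2 r)).add
    ((hasDerivAt_id r).const_mul (2 * s * M))).sub_const (s * Q ^ 2)
  refine h.congr_deriv ?_
  simp only [P']
  ring

theorem continuous_P' : Continuous (P' M Q Λ s) := by
  unfold P'
  fun_prop

theorem P_zero_neg (hs : 0 < s) (hQ : Q ≠ 0) : P M Q Λ s 0 < 0 := by
  have hsQ : 0 < s * Q ^ 2 := by positivity
  simp only [P]
  linarith

theorem eventually_pos_P' (hs : 0 < s) (hΛ : 0 < Λ) (hM : 0 ≤ M) :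
    ∀ᶠ r in atTop, 0 < P' M Q Λ s r := by
  filter_upwards [eventually_ge_atTop 1, eventually_ge_atTop (3 / (s * Λ))] with r h₁ h₃
  have hsΛr : 3 ≤ s * Λ * r := by rwa [div_le_iff₀' (by positivity)] at h₃
  simp only [P']
  nlinarith [mul_le_mul_of_nonneg_right hsΛr (sq_nonneg r), mul_nonneg hs.le hM]

theorem eventually_pos_P (hs : 0 < s) (hΛ : 0 < Λ) (hM : 0 ≤ M) :
    ∀ᶠ r in atTop, 0 < P M Q Λ s r := by
  filter_upwards [eventually_ge_atTop (2 + s * Q ^ 2), eventually_ge_atTop (3 / (s * Λ))]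
    with r h₁ h₃
  have hsQ : 0 ≤ s * Q ^ 2 := by positivity
  have hsΛr : 3 ≤ s * Λ * r := by rwa [div_le_iff₀' (by positivity)] at h₃
  have hr : 0 ≤ r := by linarith
  have hquartic : r ^ 3 ≤ s * Λ / 3 * r ^ 4 := by
    nlinarith [mul_le_mul_of_nonneg_right hsΛr (pow_nonneg hr 3)]
  have hcubic : r - 1 ≤ r ^ 3 - r ^ 2 := by nlinarith [mul_nonneg (mul_nonneg hr hr) hr]
  simp only [P]
  nlinarith [mul_nonneg (mul_nonneg hs.le hM) hr]

theorem P'_eq_mul_sub_criticalΛ {x : ℝ} (hs : s ≠ 0) (hx : x ≠ 0) :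
    P' M Q Λ s x = 4 * s * x ^ 3 / 3 * (Λ - criticalΛ M s x) := by
  unfold P' criticalΛ
  field_simp
  ring

theorem sq_sqrt_disc (hs : 0 ≤ s) (hβ : 8 * Q ^ 2 ≤ 9 * s * M ^ 2) :
    Real.sqrt (9 * s ^ 2 * M ^ 2 - 8 * s * Q ^ 2) ^ 2 = 9 * s ^ 2 * M ^ 2 - 8 * s * Q ^ 2 :=
  Real.sq_sqrt (by nlinarith)

theorem xMinus_le_xPlus : xMinus M Q s ≤ xPlus M Q s := by
  unfold xMinus xPlus
  linarith [Real.sqrt_nonneg (9 * s ^ 2 * M ^ 2 - 8 * s * Q ^ 2)]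

theorem xMinus_lt_xPlus (hs : 0 < s) (hβ : 8 * Q ^ 2 < 9 * s * M ^ 2) :
    xMinus M Q s < xPlus M Q s := by
  unfold xMinus xPlus
  linarith [Real.sqrt_pos.2 (by nlinarith : 0 < 9 * s ^ 2 * M ^ 2 - 8 * s * Q ^ 2)]

theorem xMinus_pos (hM : 0 < M) (hs : 0 < s) (hQ : Q ≠ 0) : 0 < xMinus M Q s := by
  have hsQ : 0 < s * Q ^ 2 := by positivity
  have : Real.sqrt (9 * s ^ 2 * M ^ 2 - 8 * s * Q ^ 2) < 3 * s * M :=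
    (Real.sqrt_lt' (by positivity)).2 (by nlinarith)
  unfold xMinus
  linarith

theorem two_mul_P_eq_of_P'_eq_zero {r : ℝ} (hs : 0 ≤ s) (hβ : 8 * Q ^ 2 ≤ 9 * s * M ^ 2)
    (h : P' M Q Λ s r = 0) : 2 * P M Q Λ s r = -((r - xMinus M Q s) * (r - xPlus M Q s)) := by
  unfold P' at h
  unfold P xMinus xPlus
  linear_combination (r / 2) * h - (1 / 4) * sq_sqrt_disc hs hβ

/-- The right-hand side is `Λ₊` (resp. `Λ₋`) when `2x − 3sM = √(sβ)` (resp. `−√(sβ)`). -/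
theorem criticalΛ_eq {x : ℝ} (hs : s ≠ 0) (hQ : Q ≠ 0) (hx₀ : x ≠ 0)
    (hx : x ^ 2 - 3 * s * M * x + 2 * s * Q ^ 2 = 0) :
    criticalΛ M s x = 1 / (32 * s ^ 2 * Q ^ 6) *
      (8 * Q ^ 4 - (9 * s * M ^ 2 - 8 * Q ^ 2) * (9 * s * M ^ 2 - 8 * Q ^ 2 + 4 * Q ^ 2)
        + 3 * (M * (9 * s * M ^ 2 - 8 * Q ^ 2) * (2 * x - 3 * s * M))) := by
  unfold criticalΛ
  rw [eq_comm, one_div_mul_eq_div, div_eq_div_iff (by positivity) (by simp [hs, hx₀])]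
  linear_combination (-48 * s * Q ^ 4 * x - 96 * s * M * Q ^ 2 * x ^ 2 + 48 * s ^ 2 * M * Q ^ 4
    + 72 * s ^ 2 * M ^ 2 * Q ^ 2 * x + 108 * s ^ 2 * M ^ 3 * x ^ 2) * hx

theorem xMinus_isRoot (hs : 0 ≤ s) (hβ : 8 * Q ^ 2 ≤ 9 * s * M ^ 2) :
    xMinus M Q s ^ 2 - 3 * s * M * xMinus M Q s + 2 * s * Q ^ 2 = 0 := by
  unfold xMinus
  linear_combination (1 / 4) * sq_sqrt_disc hs hβ

theorem xPlus_isRoot (hs : 0 ≤ s) (hβ : 8 * Q ^ 2 ≤ 9 * s * M ^ 2) :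
    xPlus M Q s ^ 2 - 3 * s * M * xPlus M Q s + 2 * s * Q ^ 2 = 0 := by
  unfold xPlus
  linear_combination (1 / 4) * sq_sqrt_disc hs hβ

theorem sqrt_eq_mul_sqrt_disc (hM : 0 ≤ M) (hβ : 8 * Q ^ 2 ≤ 9 * s * M ^ 2) :
    Real.sqrt (s * M ^ 2 * (9 * s * M ^ 2 - 8 * Q ^ 2) ^ 3)
      = M * (9 * s * M ^ 2 - 8 * Q ^ 2) * Real.sqrt (9 * s ^ 2 * M ^ 2 - 8 * s * Q ^ 2) := by
  rw [show s * M ^ 2 * (9 * s * M ^ 2 - 8 * Q ^ 2) ^ 3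
      = (M * (9 * s * M ^ 2 - 8 * Q ^ 2)) ^ 2 * (9 * s ^ 2 * M ^ 2 - 8 * s * Q ^ 2) by ring,
    Real.sqrt_mul (sq_nonneg _), Real.sqrt_sq (mul_nonneg hM (by linarith))]

theorem Λplus_eq_criticalΛ (hM : 0 < M) (hs : 0 < s) (hQ : Q ≠ 0)
    (hβ : 8 * Q ^ 2 ≤ 9 * s * M ^ 2) : Λplus M Q s = criticalΛ M s (xPlus M Q s) := by
  have hx : 0 < xPlus M Q s := (xMinus_pos hM hs hQ).trans_le xMinus_le_xPlus
  rw [criticalΛ_eq hs.ne' hQ hx.ne' (xPlus_isRoot hs.le hβ), Λplus, sqrt_eq_mul_sqrt_disc hM.le hβ]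
  unfold xPlus
  ring

theorem Λminus_eq_criticalΛ (hM : 0 < M) (hs : 0 < s) (hQ : Q ≠ 0)
    (hβ : 8 * Q ^ 2 ≤ 9 * s * M ^ 2) : Λminus M Q s = criticalΛ M s (xMinus M Q s) := by
  rw [criticalΛ_eq hs.ne' hQ (xMinus_pos hM hs hQ).ne' (xMinus_isRoot hs.le hβ), Λminus,
    sqrt_eq_mul_sqrt_disc hM.le hβ]
  unfold xMinus
  ring

theorem P'_xPlus_neg (hM : 0 < M) (hs : 0 < s) (hQ : Q ≠ 0) (hβ : 8 * Q ^ 2 ≤ 9 * s * M ^ 2)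
    (hΛ : Λ < Λplus M Q s) : P' M Q Λ s (xPlus M Q s) < 0 := by
  have hx : 0 < xPlus M Q s := (xMinus_pos hM hs hQ).trans_le xMinus_le_xPlus
  rw [P'_eq_mul_sub_criticalΛ hs.ne' hx.ne', ← Λplus_eq_criticalΛ hM hs hQ hβ]
  exact mul_neg_of_pos_of_neg (by positivity) (sub_neg.2 hΛ)

theorem P'_xMinus_pos (hM : 0 < M) (hs : 0 < s) (hQ : Q ≠ 0) (hβ : 8 * Q ^ 2 ≤ 9 * s * M ^ 2)
    (hΛ : Λminus M Q s < Λ) : 0 < P' M Q Λ s (xMinus M Q s) := by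
  have hx := xMinus_pos hM hs hQ
  rw [P'_eq_mul_sub_criticalΛ hs.ne' hx.ne', ← Λminus_eq_criticalΛ hM hs hQ hβ]
  exact mul_pos (by positivity) (sub_pos.2 hΛ)

theorem P_pos_of_P'_eq_zero {r : ℝ} (hs : 0 ≤ s) (hβ : 8 * Q ^ 2 ≤ 9 * s * M ^ 2)
    (h : P' M Q Λ s r = 0) (hxr : xMinus M Q s < r) (hrx : r < xPlus M Q s) :
    0 < P M Q Λ s r := by
  nlinarith [two_mul_P_eq_of_P'_eq_zero hs hβ h, mul_pos (sub_pos.2 hxr) (sub_pos.2 hrx)]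

theorem P_neg_of_P'_eq_zero {r : ℝ} (hs : 0 ≤ s) (hβ : 8 * Q ^ 2 ≤ 9 * s * M ^ 2)
    (h : P' M Q Λ s r = 0) (hrx : xPlus M Q s < r) : P M Q Λ s r < 0 := by
  nlinarith [two_mul_P_eq_of_P'_eq_zero hs hβ h,
    mul_pos (sub_pos.2 (xMinus_le_xPlus.trans_lt hrx)) (sub_pos.2 hrx)]

theorem P'_sign_of_eq_zero {r₁ r₂ : ℝ} (hsΛ : 0 < s * Λ) (h₀₁ : 0 < r₁) (h₁₂ : r₁ < r₂)
    (h₁ : P' M Q Λ s r₁ = 0) (h₂ : P' M Q Λ s r₂ = 0) :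
    (∀ x, 0 < x → x < r₁ → 0 < P' M Q Λ s x) ∧ (∀ x, r₁ < x → x < r₂ → P' M Q Λ s x < 0) ∧
      (∀ x, r₂ < x → 0 < P' M Q Λ s x) := by
  have hP' : ∀ x, P' M Q Λ s x = 4 * s * Λ / 3 * x ^ 3 + -2 * x + 2 * s * M := fun x => by
    unfold P'; ring
  have hfac : ∀ x, P' M Q Λ s x = 4 * s * Λ / 3 * (x - r₁) * (x - r₂) * (x + r₁ + r₂) :=
    fun x => by
      rw [hP']
      exact cubic_eq_mul_of_eq_zero h₁₂.ne ((hP' r₁).symm.trans h₁) ((hP' r₂).symm.trans h₂) x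
  have ha : 0 < 4 * s * Λ / 3 := by linarith
  refine ⟨fun x hx₀ hx₁ => ?_, fun x hx₁ hx₂ => ?_, fun x hx₂ => ?_⟩ <;> rw [hfac]
  · exact mul_pos (mul_pos_of_neg_of_neg (mul_neg_of_pos_of_neg ha (by linarith)) (by linarith))
      (by linarith)
  · exact mul_neg_of_neg_of_pos (mul_neg_of_pos_of_neg (mul_pos ha (by linarith)) (by linarith))
      (by linarith)
  · exact mul_pos (mul_pos (mul_pos ha (by linarith)) (by linarith)) (by linarith)

end Quartic

theorem root_structure_case_C1_general (M Q Λ s : ℝ)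
    (hM : 0 < M) (hQ : Q ≠ 0) (hΛ : 0 < Λ) (hs0 : 0 < s)
    (hβ : 8 * Q ^ 2 < 9 * s * M ^ 2)
    (hlo : Λminus M Q s < Λ) (hhi : Λ < Λplus M Q s) :
    ∃ R r₀ rinf : ℝ, 0 < R ∧ R < r₀ ∧ r₀ < rinf ∧
      P M Q Λ s R = 0 ∧ P M Q Λ s r₀ = 0 ∧ P M Q Λ s rinf = 0 ∧
      (∀ r : ℝ, 0 < r → P M Q Λ s r = 0 → r = R ∨ r = r₀ ∨ r = rinf) ∧
      0 < P' M Q Λ s R ∧ P' M Q Λ s r₀ < 0 ∧ 0 < P' M Q Λ s rinf ∧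
      (∀ r : ℝ, 0 ≤ r → r < R → P M Q Λ s r < 0) ∧
      (∀ r : ℝ, r₀ < r → r < rinf → P M Q Λ s r < 0) ∧
      (∀ r : ℝ, R < r → r < r₀ → 0 < P M Q Λ s r) ∧
      (∀ r : ℝ, rinf < r → 0 < P M Q Λ s r) := by
  have hP'cont : Continuous (P' M Q Λ s) := continuous_P'
  have hP'xPlus := P'_xPlus_neg hM hs0 hQ hβ.le hhi
  obtain ⟨r₁, ⟨hxr₁, hr₁x⟩, hP'r₁⟩ := intermediate_value_Ioo' (xMinus_lt_xPlus hs0 hβ).le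
    hP'cont.continuousOn ⟨hP'xPlus, P'_xMinus_pos hM hs0 hQ hβ.le hlo⟩
  obtain ⟨T, hP'T, hxT⟩ :=
    ((eventually_pos_P' hs0 hΛ hM.le).and (eventually_gt_atTop (xPlus M Q s))).exists
  obtain ⟨r₂, ⟨hxr₂, -⟩, hP'r₂⟩ :=
    intermediate_value_Ioo hxT.le hP'cont.continuousOn ⟨hP'xPlus, hP'T⟩
  have hr₁ : 0 < r₁ := (xMinus_pos hM hs0 hQ).trans hxr₁
  have hr₁₂ : r₁ < r₂ := hr₁x.trans hxr₂
  obtain ⟨hpos₁, hneg, hpos₂⟩ := P'_sign_of_eq_zero (mul_pos hs0 hΛ) hr₁ hr₁₂ hP'r₁ hP'r₂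
  exact exists_three_roots_of_deriv_sign hasDerivAt_P hr₁ hr₁₂ hpos₁ hneg hpos₂
    (P_zero_neg hs0 hQ) (P_pos_of_P'_eq_zero hs0.le hβ.le hP'r₁ hxr₁ hr₁x)
    (P_neg_of_P'_eq_zero hs0.le hβ.le hP'r₂ hxr₂) (eventually_pos_P hs0 hΛ hM.le)

/-- Case C₁: full root and sign structure of the quartic. -/
theorem root_structure_case_C1 (M Q Λ s : ℝ)
    (hM : 0 < M) (hQ : Q ≠ 0) (hΛ : 0 < Λ) (hs0 : 0 < s) (hs1 : s ≤ 1)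
    (hβ : 8 * Q ^ 2 < 9 * s * M ^ 2)
    (hlo : Λminus M Q s < Λ) (hhi : Λ < Λplus M Q s) :
    ∃ R r₀ rinf : ℝ, 0 < R ∧ R < r₀ ∧ r₀ < rinf ∧
      P M Q Λ s R = 0 ∧ P M Q Λ s r₀ = 0 ∧ P M Q Λ s rinf = 0 ∧
      (∀ r : ℝ, 0 < r → P M Q Λ s r = 0 → r = R ∨ r = r₀ ∨ r = rinf) ∧
      0 < P' M Q Λ s R ∧ P' M Q Λ s r₀ < 0 ∧ 0 < P' M Q Λ s rinf ∧
      (∀ r : ℝ, 0 ≤ r → r < R → P M Q Λ s r < 0) ∧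
      (∀ r : ℝ, r₀ < r → r < rinf → P M Q Λ s r < 0) ∧
      (∀ r : ℝ, R < r → r < r₀ → 0 < P M Q Λ s r) ∧
      (∀ r : ℝ, rinf < r → 0 < P M Q Λ s r) :=
  root_structure_case_C1_general M Q Λ s hM hQ hΛ hs0 hβ hlo hhi
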